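/- Strong faithfulness of the NLP translation: for any smodels program module P = ⟨R,I,O,H⟩ with translation Tr_NLP(P) = ⟨R',I,O,H∪H'⟩, the map f(M) = M ∪ {ā : a ∈ choice-heads(R) \ M} is a bijection from the stable models of P to the stable models of Tr_NLP(P), and satisfies M = f(M) ∩ Hb(P) for every stable model M of P. -/
import Mathlib


attribute [local instance] Classical.propDecidable

/-- Rules of smodels programs: choice rules `{A} ← B, not C` and weight rules
`a ← w ≤ {B = wB, not C = wC}`. -/
inductive SRule : Type
  | choice (A B C : Finset ℕ) : SRule
  | weight (a : ℕ) (w : ℕ) (B C : Finset ℕ) (wB wC : ℕ → ℕ) : SRule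

def SRule.heads : SRule → Finset ℕ
  | .choice A _ _ => A
  | .weight a _ _ _ _ _ => {a}

def SRule.pos : SRule → Finset ℕ
  | .choice _ B _ => B
  | .weight _ _ B _ _ _ => B

def SRule.neg : SRule → Finset ℕ
  | .choice _ _ C => C
  | .weight _ _ _ C _ _ => C

def SRule.atoms (r : SRule) : Set ℕ := ↑r.heads ∪ ↑r.pos ∪ ↑r.neg

/-- A positive weight rule `head ← w ≤ {B = wB}`. -/
structure PosW where
  head : ℕ
  w : ℕ
  B : Finset ℕ
  wB : ℕ → ℕ

/-- Weight realized by an interpretation `X` on a positive weight body. -/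
noncomputable def wsum (B : Finset ℕ) (wB : ℕ → ℕ) (X : Set ℕ) : ℕ :=
  ∑ b ∈ B.filter (· ∈ X), wB b

/-- Least model of a positive (weight) program. -/
def lmW (Q : Set PosW) : Set ℕ :=
  ⋂₀ {X | ∀ p ∈ Q, p.w ≤ wsum p.B p.wB X → p.head ∈ X}

/-- The input-aware reduct `R^{M,I}` of a set of smodels rules. -/
noncomputable def sreduct (R : Set SRule) (I M : Set ℕ) : Set PosW :=
  {p | (∃ A B C, SRule.choice A B C ∈ R ∧ ∃ a ∈ A, a ∈ M ∧
          (B : Set ℕ) ∩ I ⊆ M ∧ (C : Set ℕ) ∩ M = ∅ ∧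
          p = ⟨a, (B.filter (· ∉ I)).card, B.filter (· ∉ I), fun _ => 1⟩)
     ∨ (∃ a w B C wB wC, SRule.weight a w B C wB wC ∈ R ∧
          p = ⟨a, w - (∑ b ∈ B.filter (fun b => b ∈ I ∧ b ∈ M), wB b)
                 - (∑ c ∈ C.filter (· ∉ M), wC c),
               B.filter (· ∉ I), wB⟩)}

/-- An smodels program module `⟨R, I, O, H⟩`. -/
structure SMod where
  R : Set SRule
  I : Set ℕ
  O : Set ℕ
  H : Set ℕ

def SMod.hb (P : SMod) : Set ℕ := P.I ∪ P.O ∪ P.H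

def SMod.vis (P : SMod) : Set ℕ := P.I ∪ P.O

def SMod.wf (P : SMod) : Prop :=
  P.I ∩ P.O = ∅ ∧ P.I ∩ P.H = ∅ ∧ P.O ∩ P.H = ∅ ∧
  (∀ r ∈ P.R, r.atoms ⊆ P.hb) ∧ (∀ r ∈ P.R, (r.heads : Set ℕ) ∩ P.I = ∅)

/-- Stable models of an smodels program module. -/
def SMod.SM (P : SMod) : Set (Set ℕ) :=
  {M | M ⊆ P.hb ∧ M \ P.I = lmW (sreduct P.R P.I M)}

def sdepEdge (R : Set SRule) (b a : ℕ) : Prop := ∃ r ∈ R, a ∈ r.heads ∧ b ∈ r.pos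

def sdep (R : Set SRule) : ℕ → ℕ → Prop := Relation.ReflTransGen (sdepEdge R)

/-- The composition `P₁ ⊕ P₂` (also underlying the join `⊔`). -/
def SMod.comp (P₁ P₂ : SMod) : SMod :=
  ⟨P₁.R ∪ P₂.R, (P₁.I \ P₂.O) ∪ (P₂.I \ P₁.O), P₁.O ∪ P₂.O, P₁.H ∪ P₂.H⟩

def compDefined (P₁ P₂ : SMod) : Prop :=
  P₁.O ∩ P₂.O = ∅ ∧ P₁.H ∩ P₂.hb = ∅ ∧ P₂.H ∩ P₁.hb = ∅

def mutuallyDep (P₁ P₂ : SMod) : Prop :=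
  ∃ a ∈ P₁.O, ∃ b ∈ P₂.O,
    sdep (P₁.R ∪ P₂.R) a b ∧ sdep (P₁.R ∪ P₂.R) b a

def joinDefined (P₁ P₂ : SMod) : Prop := compDefined P₁ P₂ ∧ ¬ mutuallyDep P₁ P₂

def compatible (P₁ P₂ : SMod) (M₁ M₂ : Set ℕ) : Prop :=
  M₁ ∩ P₂.vis = M₂ ∩ P₁.vis

def natJoin (P₁ P₂ : SMod) (A₁ A₂ : Set (Set ℕ)) : Set (Set ℕ) :=
  {M | ∃ M₁ ∈ A₁, ∃ M₂ ∈ A₂, compatible P₁ P₂ M₁ M₂ ∧ M = M₁ ∪ M₂}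

/-- Visible equivalence of modules. -/
def SMod.visEq (P Q : SMod) : Prop :=
  P.vis = Q.vis ∧ ∃ f : P.SM → Q.SM, Function.Bijective f ∧
    ∀ M : P.SM, (M : Set ℕ) ∩ P.vis = (f M : Set ℕ) ∩ Q.vis

/-- Modular equivalence of modules. -/
def SMod.modEq (P Q : SMod) : Prop := P.I = Q.I ∧ P.visEq Q

/-- A normal rule `a ← B, not C`, encoded as a weight rule with unit weights
and bound `|B| + |C|`. -/
def nrule (a : ℕ) (B C : Finset ℕ) : SRule :=
  SRule.weight a (B.card + C.card) B C (fun _ => 1) (fun _ => 1)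

/-- Atoms having a head occurrence in a choice rule of `R`. -/
def choiceHeads (R : Set SRule) : Set ℕ :=
  {a | ∃ A B C, SRule.choice A B C ∈ R ∧ a ∈ A}

/-- Total weight of a finite set of literals. -/
def wsumF (B : Finset ℕ) (w : ℕ → ℕ) : ℕ := ∑ b ∈ B, w b

/-- The translation `Tr_NLP` of an smodels program module into a normal logic
program module, using `bar` to produce the fresh atoms `ā`. -/
def trNLP (P : SMod) (bar : ℕ → ℕ) : SMod :=
  ⟨{r' | (∃ A B C, SRule.choice A B C ∈ P.R ∧ ∃ a ∈ A,
            r' = nrule a B (C ∪ {bar a}))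
       ∨ (∃ A B C, SRule.choice A B C ∈ P.R ∧ ∃ a ∈ A,
            r' = nrule (bar a) ∅ {a})
       ∨ (∃ a w B C wB wC, SRule.weight a w B C wB wC ∈ P.R ∧
            ∃ B' C', B' ⊆ B ∧ C' ⊆ C ∧ w ≤ wsumF B' wB + wsumF C' wC ∧
              r' = nrule a B' C')},
   P.I, P.O, P.H ∪ bar '' choiceHeads P.R⟩

section Helpers

lemma wsum_mono {B : Finset ℕ} {w : ℕ → ℕ} {X Y : Set ℕ} (h : X ⊆ Y) :
    wsum B w X ≤ wsum B w Y := by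
  apply Finset.sum_le_sum_of_subset
  intro x hx
  simp only [Finset.mem_filter] at hx ⊢
  exact ⟨hx.1, h hx.2⟩

def closedQ (Q : Set PosW) (X : Set ℕ) : Prop :=
  ∀ p ∈ Q, p.w ≤ wsum p.B p.wB X → p.head ∈ X

lemma lmW_subset {Q : Set PosW} {X : Set ℕ} (h : closedQ Q X) : lmW Q ⊆ X :=
  Set.sInter_subset_of_mem h

lemma lmW_closed (Q : Set PosW) : closedQ Q (lmW Q) := by
  intro p hp hw
  intro X hX
  exact hX p hp (hw.trans (wsum_mono fun y hy => hy X hX))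

lemma card_filter_eq_iff (s : Finset ℕ) (p : ℕ → Prop) [DecidablePred p] :
    s.card ≤ (s.filter p).card ↔ ∀ x ∈ s, p x := by
  constructor
  · intro h x hx
    have he : s.filter p = s :=
      Finset.eq_of_subset_of_card_le (Finset.filter_subset p s) h
    rw [← he] at hx
    exact (Finset.mem_filter.mp hx).2
  · intro h
    rw [Finset.filter_eq_self.mpr h]

lemma sum_one (s : Finset ℕ) : (∑ _x ∈ s, (1:ℕ)) = s.card := by simp

lemma wsum_one (B : Finset ℕ) (X : Set ℕ) :
    wsum B (fun _ => 1) X = (B.filter (fun b => b ∈ X)).card := by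
  simp [wsum]

lemma nfire (B C : Finset ℕ) (I N X : Set ℕ) :
    (B.card + C.card) - (∑ b ∈ B.filter (fun b => b ∈ I ∧ b ∈ N), (1:ℕ))
      - (∑ c ∈ C.filter (fun c => c ∉ N), (1:ℕ))
      ≤ wsum (B.filter (fun b => b ∉ I)) (fun _ => 1) X
    ↔ ((∀ c ∈ C, c ∉ N) ∧ (∀ b ∈ B, b ∈ I → b ∈ N) ∧ ∀ b ∈ B, b ∉ I → b ∈ X) := by
  rw [wsum_one, sum_one, sum_one]
  have hsplit : (B.filter (fun b => b ∈ I)).card + (B.filter (fun b => ¬ b ∈ I)).card = B.card :=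
    Finset.card_filter_add_card_filter_not _
  have hff : B.filter (fun b => b ∈ I ∧ b ∈ N) = (B.filter (fun b => b ∈ I)).filter (fun b => b ∈ N) := by
    rw [Finset.filter_filter]
  have h1 : (B.filter (fun b => b ∈ I ∧ b ∈ N)).card ≤ (B.filter (fun b => b ∈ I)).card := by
    rw [hff]; exact Finset.card_le_card (Finset.filter_subset _ _)
  have h2 : (C.filter (fun c => c ∉ N)).card ≤ C.card :=
    Finset.card_le_card (Finset.filter_subset _ _)
  have h3 : ((B.filter (fun b => b ∉ I)).filter (fun b => b ∈ X)).card ≤ (B.filter (fun b => b ∉ I)).card :=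
    Finset.card_le_card (Finset.filter_subset _ _)
  have e1 : (B.filter (fun b => b ∈ I)).card ≤ (B.filter (fun b => b ∈ I ∧ b ∈ N)).card
      ↔ ∀ b ∈ B, b ∈ I → b ∈ N := by
    rw [hff, card_filter_eq_iff]
    constructor
    · intro h b hb hbI; exact h b (Finset.mem_filter.mpr ⟨hb, hbI⟩)
    · intro h b hb; exact h b (Finset.mem_filter.mp hb).1 (Finset.mem_filter.mp hb).2
  have e2 : C.card ≤ (C.filter (fun c => c ∉ N)).card ↔ ∀ c ∈ C, c ∉ N :=
    card_filter_eq_iff _ _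
  have e3 : (B.filter (fun b => b ∉ I)).card ≤ ((B.filter (fun b => b ∉ I)).filter (fun b => b ∈ X)).card
      ↔ ∀ b ∈ B, b ∉ I → b ∈ X := by
    rw [card_filter_eq_iff]
    constructor
    · intro h b hb hbI; exact h b (Finset.mem_filter.mpr ⟨hb, hbI⟩)
    · intro h b hb; exact h b (Finset.mem_filter.mp hb).1 (Finset.mem_filter.mp hb).2
  constructor
  · intro h
    refine ⟨e2.mp ?_, e1.mp ?_, e3.mp ?_⟩ <;> omega
  · rintro ⟨hc, hb, hx⟩
    have := e2.mpr hc; have := e1.mpr hb; have := e3.mpr hx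
    omega

end Helpers
section Helpers2

lemma wfire (w : ℕ) (B C : Finset ℕ) (wB wC : ℕ → ℕ) (I M X : Set ℕ) :
    (w - (∑ b ∈ B.filter (fun b => b ∈ I ∧ b ∈ M), wB b)
       - (∑ c ∈ C.filter (fun c => c ∉ M), wC c)
       ≤ wsum (B.filter (fun b => b ∉ I)) wB X)
    ↔ ∃ B' C', B' ⊆ B ∧ C' ⊆ C ∧ w ≤ wsumF B' wB + wsumF C' wC ∧
        (∀ c ∈ C', c ∉ M) ∧ (∀ b ∈ B', b ∈ I → b ∈ M) ∧ (∀ b ∈ B', b ∉ I → b ∈ X) := by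
  constructor
  · intro h
    refine ⟨B.filter (fun b => (b ∈ I ∧ b ∈ M) ∨ (b ∉ I ∧ b ∈ X)), C.filter (fun c => c ∉ M),
      Finset.filter_subset _ _, Finset.filter_subset _ _, ?_, ?_, ?_, ?_⟩
    · have hdis : Disjoint (B.filter (fun b => b ∈ I ∧ b ∈ M)) (B.filter (fun b => b ∉ I ∧ b ∈ X)) := by
        rw [Finset.disjoint_left]
        intro x hx1 hx2
        exact (Finset.mem_filter.mp hx2).2.1 (Finset.mem_filter.mp hx1).2.1
      have hor : B.filter (fun b => (b ∈ I ∧ b ∈ M) ∨ (b ∉ I ∧ b ∈ X))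
          = B.filter (fun b => b ∈ I ∧ b ∈ M) ∪ B.filter (fun b => b ∉ I ∧ b ∈ X) := by
        rw [← Finset.filter_or]
      have hsum : wsumF (B.filter (fun b => (b ∈ I ∧ b ∈ M) ∨ (b ∉ I ∧ b ∈ X))) wB
          = (∑ b ∈ B.filter (fun b => b ∈ I ∧ b ∈ M), wB b)
            + (∑ b ∈ B.filter (fun b => b ∉ I ∧ b ∈ X), wB b) := by
        rw [wsumF, hor, Finset.sum_union hdis]
      have hfx : B.filter (fun b => b ∉ I ∧ b ∈ X)
          = (B.filter (fun b => b ∉ I)).filter (fun b => b ∈ X) := by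
        rw [Finset.filter_filter]
      have hwX : wsum (B.filter (fun b => b ∉ I)) wB X
          = ∑ b ∈ B.filter (fun b => b ∉ I ∧ b ∈ X), wB b := by
        rw [wsum, hfx]
      rw [hsum, ← hwX, wsumF]
      omega
    · intro c hc; exact (Finset.mem_filter.mp hc).2
    · intro b hb hbI
      rcases (Finset.mem_filter.mp hb).2 with h' | h'
      · exact h'.2
      · exact absurd hbI h'.1
    · intro b hb hbI
      rcases (Finset.mem_filter.mp hb).2 with h' | h'
      · exact absurd h'.1 hbI
      · exact h'.2
  · rintro ⟨B', C', hB', hC', hw, hCM, hBI, hBX⟩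
    have hC : wsumF C' wC ≤ ∑ c ∈ C.filter (fun c => c ∉ M), wC c := by
      apply Finset.sum_le_sum_of_subset
      intro c hc
      exact Finset.mem_filter.mpr ⟨hC' hc, hCM c hc⟩
    have hBsplit : wsumF B' wB = (∑ b ∈ B'.filter (fun b => b ∈ I), wB b)
        + (∑ b ∈ B'.filter (fun b => ¬ b ∈ I), wB b) :=
      (Finset.sum_filter_add_sum_filter_not _ _ _).symm
    have hB1 : (∑ b ∈ B'.filter (fun b => b ∈ I), wB b)
        ≤ ∑ b ∈ B.filter (fun b => b ∈ I ∧ b ∈ M), wB b := by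
      apply Finset.sum_le_sum_of_subset
      intro b hb
      have := Finset.mem_filter.mp hb
      exact Finset.mem_filter.mpr ⟨hB' this.1, this.2, hBI b this.1 this.2⟩
    have hB2 : (∑ b ∈ B'.filter (fun b => ¬ b ∈ I), wB b)
        ≤ wsum (B.filter (fun b => b ∉ I)) wB X := by
      apply Finset.sum_le_sum_of_subset
      intro b hb
      have := Finset.mem_filter.mp hb
      refine Finset.mem_filter.mpr ⟨Finset.mem_filter.mpr ⟨hB' this.1, this.2⟩, hBX b this.1 this.2⟩
    omega

end Helpers2
section Helpers3

/-- The reduct of a normal rule `nrule a B C` with respect to `(I, N)`. -/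
noncomputable def nred (I N : Set ℕ) (a : ℕ) (B C : Finset ℕ) : PosW :=
  ⟨a, (B.card + C.card) - (∑ _b ∈ B.filter (fun b => b ∈ I ∧ b ∈ N), 1)
     - (∑ _c ∈ C.filter (fun c => c ∉ N), 1),
   B.filter (fun b => b ∉ I), fun _ => 1⟩

lemma nred_head (I N : Set ℕ) (a : ℕ) (B C : Finset ℕ) : (nred I N a B C).head = a := rfl

lemma nred_fire (I N X : Set ℕ) (a : ℕ) (B C : Finset ℕ) :
    (nred I N a B C).w ≤ wsum (nred I N a B C).B (nred I N a B C).wB X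
    ↔ ((∀ c ∈ C, c ∉ N) ∧ (∀ b ∈ B, b ∈ I → b ∈ N) ∧ ∀ b ∈ B, b ∉ I → b ∈ X) :=
  nfire B C I N X

lemma nred_mem_sreduct {R : Set SRule} {I N : Set ℕ} {a : ℕ} {B C : Finset ℕ}
    (h : nrule a B C ∈ R) : nred I N a B C ∈ sreduct R I N := by
  refine Or.inr ⟨a, B.card + C.card, B, C, fun _ => 1, fun _ => 1, h, ?_⟩
  rfl

lemma sreduct_trNLP_cases {P : SMod} {bar : ℕ → ℕ} {N : Set ℕ} {p : PosW}
    (hp : p ∈ sreduct (trNLP P bar).R P.I N) :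
    (∃ A B C a, SRule.choice A B C ∈ P.R ∧ a ∈ A ∧ p = nred P.I N a B (C ∪ {bar a})) ∨
    (∃ A B C a, SRule.choice A B C ∈ P.R ∧ a ∈ A ∧ p = nred P.I N (bar a) ∅ {a}) ∨
    (∃ a w B C wB wC B' C', SRule.weight a w B C wB wC ∈ P.R ∧ B' ⊆ B ∧ C' ⊆ C ∧
       w ≤ wsumF B' wB + wsumF C' wC ∧ p = nred P.I N a B' C') := by
  rcases hp with ⟨A, B, C, hr, -⟩ | ⟨a, w, B, C, wB, wC, hr, hp⟩
  · rcases hr with ⟨_,_,_,_,_,_,he⟩ | ⟨_,_,_,_,_,_,he⟩ | ⟨_,_,_,_,_,_,_,_,_,_,_,_,he⟩ <;>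
      simp [nrule] at he
  · rcases hr with ⟨A, B₀, C₀, hc, a₀, ha₀, he⟩ | ⟨A, B₀, C₀, hc, a₀, ha₀, he⟩ |
      ⟨a₀, w₀, B₀, C₀, wB₀, wC₀, hc, B', C', hB', hC', hw, he⟩
    · left
      refine ⟨A, B₀, C₀, a₀, hc, ha₀, ?_⟩
      rw [nrule] at he
      injection he with e1 e2 e3 e4 e5 e6
      subst e1; subst e3; subst e4; subst e5; subst e6
      subst e2
      rw [hp, nred]
    · right; left
      refine ⟨A, B₀, C₀, a₀, hc, ha₀, ?_⟩
      rw [nrule] at he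
      injection he with e1 e2 e3 e4 e5 e6
      subst e1; subst e3; subst e4; subst e5; subst e6
      subst e2
      rw [hp, nred]
    · right; right
      refine ⟨a₀, w₀, B₀, C₀, wB₀, wC₀, B', C', hc, hB', hC', hw, ?_⟩
      rw [nrule] at he
      injection he with e1 e2 e3 e4 e5 e6
      subst e1; subst e3; subst e4; subst e5; subst e6
      subst e2
      rw [hp, nred]

end Helpers3
section KeyLemma

lemma cfire (B : Finset ℕ) (I X : Set ℕ) :
    (B.filter (fun b => b ∉ I)).card ≤ wsum (B.filter (fun b => b ∉ I)) (fun _ => 1) X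
    ↔ ∀ b ∈ B, b ∉ I → b ∈ X := by
  rw [wsum_one, card_filter_eq_iff]
  constructor
  · intro h b hb hbI; exact h b (Finset.mem_filter.mpr ⟨hb, hbI⟩)
  · intro h b hb; exact h b (Finset.mem_filter.mp hb).1 (Finset.mem_filter.mp hb).2

lemma atoms_hb {P : SMod} (hwf : P.wf) {r : SRule} (hr : r ∈ P.R) {x : ℕ}
    (hx : x ∈ r.heads ∨ x ∈ r.pos ∨ x ∈ r.neg) : x ∈ P.hb := by
  apply hwf.2.2.2.1 r hr
  rcases hx with h | h | h
  · exact Or.inl (Or.inl h)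
  · exact Or.inl (Or.inr h)
  · exact Or.inr h

lemma key (P : SMod) (hwf : P.wf) (bar : ℕ → ℕ) (hinj : Function.Injective bar)
    (hfresh : ∀ n, bar n ∉ P.hb) (M : Set ℕ) (hM : M ⊆ P.hb) :
    lmW (sreduct (trNLP P bar).R P.I (M ∪ bar '' (choiceHeads P.R \ M)))
      = lmW (sreduct P.R P.I M) ∪ bar '' (choiceHeads P.R \ M) := by
  set S : Set ℕ := bar '' (choiceHeads P.R \ M) with hS
  set N : Set ℕ := M ∪ S with hN
  set Q : Set PosW := sreduct P.R P.I M with hQ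
  set Q' : Set PosW := sreduct (trNLP P bar).R P.I N with hQ'
  have hShb : ∀ x ∈ S, x ∉ P.hb := by
    rintro x ⟨a, -, rfl⟩; exact hfresh a
  have hNM : ∀ x ∈ P.hb, (x ∈ N ↔ x ∈ M) := by
    intro x hx
    constructor
    · rintro (h | h)
      · exact h
      · exact absurd hx (hShb x h)
    · exact fun h => Or.inl h
  have hbarN : ∀ a ∈ choiceHeads P.R, (bar a ∈ N ↔ a ∉ M) := by
    intro a ha
    constructor
    · rintro (h | ⟨a', ⟨-, ha'M⟩, heq⟩)
      · exact absurd (hM h) (hfresh a)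
      · rwa [← hinj heq]
    · intro h; exact Or.inr ⟨a, ⟨ha, h⟩, rfl⟩
  -- S ⊆ lmW Q'
  have hS_lm : S ⊆ lmW Q' := by
    rintro x ⟨a, ⟨haCH, haM⟩, rfl⟩
    obtain ⟨A, B, C, hc, haA⟩ := haCH
    have hahb : a ∈ P.hb := atoms_hb hwf hc (Or.inl haA)
    have hr2 : nrule (bar a) ∅ {a} ∈ (trNLP P bar).R :=
      Or.inr (Or.inl ⟨A, B, C, hc, a, haA, rfl⟩)
    have hmem : nred P.I N (bar a) ∅ {a} ∈ Q' := nred_mem_sreduct hr2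
    refine lmW_closed Q' _ hmem ((nred_fire _ _ _ _ _ _).mpr ⟨?_, ?_, ?_⟩)
    · intro c hc'
      rw [Finset.mem_singleton] at hc'
      subst hc'
      intro hcN
      exact haM ((hNM c hahb).mp hcN)
    · intro b hb; exact absurd hb (Finset.notMem_empty b)
    · intro b hb; exact absurd hb (Finset.notMem_empty b)
  -- lmW Q ⊆ lmW Q'
  have hQ_lm : lmW Q ⊆ lmW Q' := by
    apply lmW_subset
    intro p hp hfire
    rcases hp with ⟨A, B, C, hc, a, haA, haM, hBI, hCM, rfl⟩ |
      ⟨a, w, B, C, wB, wC, hr, rfl⟩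
    · -- choice-origin rule of Q
      have hBlm : ∀ b ∈ B, b ∉ P.I → b ∈ lmW Q' := (cfire B P.I (lmW Q')).mp hfire
      have hr1 : nrule a B (C ∪ {bar a}) ∈ (trNLP P bar).R :=
        Or.inl ⟨A, B, C, hc, a, haA, rfl⟩
      have hmem : nred P.I N a B (C ∪ {bar a}) ∈ Q' := nred_mem_sreduct hr1
      show a ∈ lmW Q'
      refine lmW_closed Q' _ hmem ((nred_fire _ _ _ _ _ _).mpr ⟨?_, ?_, ?_⟩)
      · intro c hcm
        rcases Finset.mem_union.mp hcm with h | h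
        · have hchb : c ∈ P.hb := atoms_hb hwf hc (Or.inr (Or.inr h))
          intro hcN
          have hcM := (hNM c hchb).mp hcN
          exact Set.eq_empty_iff_forall_notMem.mp hCM c ⟨Finset.mem_coe.mpr h, hcM⟩
        · rw [Finset.mem_singleton] at h
          subst h
          intro hcN
          exact (hbarN a ⟨A, B, C, hc, haA⟩).mp hcN haM
      · intro b hb hbI
        exact Or.inl (hBI ⟨Finset.mem_coe.mpr hb, hbI⟩)
      · exact hBlm
    · -- weight-origin rule of Q
      obtain ⟨B', C', hB', hC', hw, hCM', hBI', hBX'⟩ :=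
        (wfire w B C wB wC P.I M (lmW Q')).mp hfire
      have hr3 : nrule a B' C' ∈ (trNLP P bar).R :=
        Or.inr (Or.inr ⟨a, w, B, C, wB, wC, hr, B', C', hB', hC', hw, rfl⟩)
      have hmem : nred P.I N a B' C' ∈ Q' := nred_mem_sreduct hr3
      show a ∈ lmW Q'
      refine lmW_closed Q' _ hmem ((nred_fire _ _ _ _ _ _).mpr ⟨?_, ?_, ?_⟩)
      · intro c hcm
        have hchb : c ∈ P.hb := atoms_hb hwf hr (Or.inr (Or.inr (hC' hcm)))
        intro hcN
        exact hCM' c hcm ((hNM c hchb).mp hcN)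
      · intro b hb hbI
        exact Or.inl (hBI' b hb hbI)
      · exact hBX'
  -- lmW Q' ⊆ lmW Q ∪ S
  have hQ'_lm : lmW Q' ⊆ lmW Q ∪ S := by
    apply lmW_subset
    intro p hp hfire
    rcases sreduct_trNLP_cases hp with ⟨A, B, C, a, hc, haA, rfl⟩ |
      ⟨A, B, C, a, hc, haA, rfl⟩ |
      ⟨a, w, B, C, wB, wC, B', C', hr, hB', hC', hw, rfl⟩
    · -- r1 origin
      obtain ⟨hCn, hBIn, hBX⟩ := (nred_fire _ _ _ _ _ _).mp hfire
      have haM : a ∈ M := by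
        by_contra haM
        exact hCn (bar a) (Finset.mem_union_right _ (Finset.mem_singleton_self _))
          ((hbarN a ⟨A, B, C, hc, haA⟩).mpr haM)
      have hCM : (C : Set ℕ) ∩ M = ∅ := by
        apply Set.eq_empty_iff_forall_notMem.mpr
        rintro c ⟨hcC, hcM⟩
        exact hCn c (Finset.mem_union_left _ (Finset.mem_coe.mp hcC)) (Or.inl hcM)
      have hBI : (B : Set ℕ) ∩ P.I ⊆ M := by
        rintro b ⟨hbB, hbI⟩
        have hbhb : b ∈ P.hb := atoms_hb hwf hc (Or.inr (Or.inl (Finset.mem_coe.mp hbB)))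
        exact (hNM b hbhb).mp (hBIn b (Finset.mem_coe.mp hbB) hbI)
      have hBlm : ∀ b ∈ B, b ∉ P.I → b ∈ lmW Q := by
        intro b hb hbI
        have hbhb : b ∈ P.hb := atoms_hb hwf hc (Or.inr (Or.inl hb))
        rcases hBX b hb hbI with h | h
        · exact h
        · exact absurd hbhb (hShb b h)
      have hmem : (⟨a, (B.filter (· ∉ P.I)).card, B.filter (· ∉ P.I), fun _ => 1⟩ : PosW) ∈ Q :=
        Or.inl ⟨A, B, C, hc, a, haA, haM, hBI, hCM, rfl⟩
      show a ∈ lmW Q ∪ S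
      exact Or.inl (lmW_closed Q _ hmem ((cfire B P.I (lmW Q)).mpr hBlm))
    · -- r2 origin
      obtain ⟨hCn, -, -⟩ := (nred_fire _ _ _ _ _ _).mp hfire
      have haN : a ∉ N := hCn a (Finset.mem_singleton_self a)
      have haM : a ∉ M := fun h => haN (Or.inl h)
      exact Or.inr ⟨a, ⟨⟨A, B, C, hc, haA⟩, haM⟩, rfl⟩
    · -- weight translation origin
      obtain ⟨hCn, hBIn, hBX⟩ := (nred_fire _ _ _ _ _ _).mp hfire
      have hfireQ : w - (∑ b ∈ B.filter (fun b => b ∈ P.I ∧ b ∈ M), wB b)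
          - (∑ c ∈ C.filter (fun c => c ∉ M), wC c)
          ≤ wsum (B.filter (fun b => b ∉ P.I)) wB (lmW Q) := by
        apply (wfire w B C wB wC P.I M (lmW Q)).mpr
        refine ⟨B', C', hB', hC', hw, ?_, ?_, ?_⟩
        · intro c hcm hcM
          exact hCn c hcm (Or.inl hcM)
        · intro b hb hbI
          have hbhb : b ∈ P.hb := atoms_hb hwf hr (Or.inr (Or.inl (hB' hb)))
          exact (hNM b hbhb).mp (hBIn b hb hbI)
        · intro b hb hbI
          have hbhb : b ∈ P.hb := atoms_hb hwf hr (Or.inr (Or.inl (hB' hb)))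
          rcases hBX b hb hbI with h | h
          · exact h
          · exact absurd hbhb (hShb b h)
      have hmem : (⟨a, w - (∑ b ∈ B.filter (fun b => b ∈ P.I ∧ b ∈ M), wB b)
          - (∑ c ∈ C.filter (· ∉ M), wC c), B.filter (· ∉ P.I), wB⟩ : PosW) ∈ Q :=
        Or.inr ⟨a, w, B, C, wB, wC, hr, rfl⟩
      show a ∈ lmW Q ∪ S
      exact Or.inl (lmW_closed Q _ hmem hfireQ)
  exact Set.Subset.antisymm hQ'_lm (Set.union_subset hQ_lm hS_lm)

end KeyLemma
section Final

lemma lmW_hb (P : SMod) (hwf : P.wf) (M : Set ℕ) :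
    lmW (sreduct P.R P.I M) ⊆ P.hb := by
  apply lmW_subset
  intro p hp _
  rcases hp with ⟨A, B, C, hc, a, haA, -, -, -, rfl⟩ | ⟨a, w, B, C, wB, wC, hr, rfl⟩
  · exact atoms_hb hwf hc (Or.inl haA)
  · exact atoms_hb hwf hr (Or.inl (Finset.mem_singleton_self a))

lemma choiceHeads_hb {P : SMod} (hwf : P.wf) {a : ℕ} (ha : a ∈ choiceHeads P.R) :
    a ∈ P.hb := by
  obtain ⟨A, B, C, hc, haA⟩ := ha
  exact atoms_hb hwf hc (Or.inl haA)

lemma bar_mem_lm {P : SMod} {bar : ℕ → ℕ} {N : Set ℕ} {a : ℕ}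
    (haCH : a ∈ choiceHeads P.R) (haN : a ∉ N) :
    bar a ∈ lmW (sreduct (trNLP P bar).R P.I N) := by
  obtain ⟨A, B, C, hc, haA⟩ := haCH
  have hr2 : nrule (bar a) ∅ {a} ∈ (trNLP P bar).R :=
    Or.inr (Or.inl ⟨A, B, C, hc, a, haA, rfl⟩)
  refine lmW_closed _ _ (nred_mem_sreduct hr2) ((nred_fire _ _ _ _ _ _).mpr ⟨?_, ?_, ?_⟩)
  · intro c hc'
    rw [Finset.mem_singleton] at hc'
    subst hc'
    exact haN
  · intro b hb; exact absurd hb (Finset.notMem_empty b)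
  · intro b hb; exact absurd hb (Finset.notMem_empty b)

lemma bar_not_lm (P : SMod) (hwf : P.wf) (bar : ℕ → ℕ) (hinj : Function.Injective bar)
    (hfresh : ∀ n, bar n ∉ P.hb) (N : Set ℕ) (a : ℕ) (haN : a ∈ N) :
    bar a ∉ lmW (sreduct (trNLP P bar).R P.I N) := by
  intro hmem
  set L := lmW (sreduct (trNLP P bar).R P.I N) with hL
  have hclosed : closedQ (sreduct (trNLP P bar).R P.I N) (L \ {bar a}) := by
    intro p hp hfire
    have hfireL : p.w ≤ wsum p.B p.wB L := hfire.trans (wsum_mono Set.diff_subset)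
    have hhead : p.head ∈ L := lmW_closed _ p hp hfireL
    refine ⟨hhead, ?_⟩
    intro heq
    rw [Set.mem_singleton_iff] at heq
    rcases sreduct_trNLP_cases hp with ⟨A, B, C, c, hc, hcA, rfl⟩ |
      ⟨A, B, C, c, hc, hcA, rfl⟩ | ⟨c, w, B, C, wB, wC, B', C', hr, -, -, -, rfl⟩
    · rw [nred_head] at heq
      exact hfresh a (heq ▸ atoms_hb hwf hc (Or.inl hcA))
    · rw [nred_head] at heq
      obtain ⟨hCn, -, -⟩ := (nred_fire _ _ _ _ _ _).mp hfire
      exact hCn c (Finset.mem_singleton_self c) (hinj heq ▸ haN)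
    · rw [nred_head] at heq
      exact hfresh a (heq ▸ atoms_hb hwf hr (Or.inl (Finset.mem_singleton_self c)))
  exact (lmW_subset hclosed hmem).2 rfl

theorem trNLP_strongly_faithful' (P : SMod) (hwf : P.wf) (bar : ℕ → ℕ)
    (hinj : Function.Injective bar) (hfresh : ∀ n, bar n ∉ P.hb) :
    Set.BijOn (fun M => M ∪ bar '' (choiceHeads P.R \ M))
      P.SM (trNLP P bar).SM ∧
    ∀ M ∈ P.SM, M = (M ∪ bar '' (choiceHeads P.R \ M)) ∩ P.hb := by
  have hIhb : P.I ⊆ P.hb := fun x hx => Or.inl (Or.inl hx)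
  have hhb' : (trNLP P bar).hb = P.hb ∪ bar '' choiceHeads P.R := by
    show P.I ∪ P.O ∪ (P.H ∪ bar '' choiceHeads P.R) = P.I ∪ P.O ∪ P.H ∪ bar '' choiceHeads P.R
    rw [Set.union_assoc (P.I ∪ P.O)]
  -- recovery
  have hrec : ∀ M : Set ℕ, M ⊆ P.hb →
      M = (M ∪ bar '' (choiceHeads P.R \ M)) ∩ P.hb := by
    intro M hM
    apply Set.Subset.antisymm
    · intro x hx; exact ⟨Or.inl hx, hM hx⟩
    · rintro x ⟨hx | ⟨a, -, rfl⟩, hxhb⟩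
      · exact hx
      · exact absurd hxhb (hfresh a)
  -- forward
  have hmaps : ∀ M ∈ P.SM, (M ∪ bar '' (choiceHeads P.R \ M)) ∈ (trNLP P bar).SM := by
    rintro M ⟨hMhb, hMst⟩
    set S : Set ℕ := bar '' (choiceHeads P.R \ M) with hS
    have hSI : ∀ x ∈ S, x ∉ P.I := by
      rintro x ⟨a, -, rfl⟩ hxI
      exact hfresh a (hIhb hxI)
    constructor
    · rw [hhb']
      rintro x (hx | ⟨a, ⟨haCH, -⟩, rfl⟩)
      · exact Or.inl (hMhb hx)
      · exact Or.inr ⟨a, haCH, rfl⟩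
    · show (M ∪ S) \ P.I = lmW (sreduct (trNLP P bar).R P.I (M ∪ S))
      rw [key P hwf bar hinj hfresh M hMhb, ← hMst]
      apply Set.Subset.antisymm
      · rintro x ⟨hx | hx, hxI⟩
        · exact Or.inl ⟨hx, hxI⟩
        · exact Or.inr hx
      · rintro x (⟨hx, hxI⟩ | hx)
        · exact ⟨Or.inl hx, hxI⟩
        · exact ⟨Or.inr hx, hSI x hx⟩
  -- backward
  have hsurj : ∀ N ∈ (trNLP P bar).SM, ∃ M ∈ P.SM,
      M ∪ bar '' (choiceHeads P.R \ M) = N := by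
    rintro N ⟨hNhb, hNst⟩
    rw [hhb'] at hNhb
    have hI' : (trNLP P bar).I = P.I := rfl
    rw [hI'] at hNst
    set M : Set ℕ := N ∩ P.hb with hMdef
    have hMhb : M ⊆ P.hb := Set.inter_subset_right
    have hbarI : ∀ a : ℕ, bar a ∉ P.I := fun a ha => hfresh a (hIhb ha)
    have hbariff : ∀ a ∈ choiceHeads P.R, (bar a ∈ N ↔ a ∉ N) := by
      intro a haCH
      constructor
      · intro hbN
        intro haN
        have : bar a ∈ N \ P.I := ⟨hbN, hbarI a⟩
        rw [hNst] at this
        exact bar_not_lm P hwf bar hinj hfresh N a haN this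
      · intro haN
        have := bar_mem_lm (bar := bar) haCH haN
        rw [← hNst] at this
        exact this.1
    have hNform : N = M ∪ bar '' (choiceHeads P.R \ M) := by
      apply Set.Subset.antisymm
      · intro x hxN
        by_cases hxhb : x ∈ P.hb
        · exact Or.inl ⟨hxN, hxhb⟩
        · rcases hNhb hxN with hx | ⟨a, haCH, rfl⟩
          · exact absurd hx hxhb
          · have haN : a ∉ N := (hbariff a haCH).mp hxN
            exact Or.inr ⟨a, ⟨haCH, fun h => haN h.1⟩, rfl⟩
      · rintro x (hx | ⟨a, ⟨haCH, haM⟩, rfl⟩)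
        · exact hx.1
        · have haN : a ∉ N := fun h => haM ⟨h, choiceHeads_hb hwf haCH⟩
          exact (hbariff a haCH).mpr haN
    have hShb : ∀ x ∈ bar '' (choiceHeads P.R \ M), x ∉ P.hb := by
      rintro x ⟨a, -, rfl⟩; exact hfresh a
    refine ⟨M, ⟨hMhb, ?_⟩, hNform.symm⟩
    have hkey := key P hwf bar hinj hfresh M hMhb
    rw [hNform, hkey] at hNst
    set S : Set ℕ := bar '' (choiceHeads P.R \ M) with hS
    -- hNst : (M ∪ S) \ P.I = lmW (sreduct P.R P.I M) ∪ S
    have hQhb := lmW_hb P hwf M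
    apply Set.Subset.antisymm
    · rintro x ⟨hxM, hxI⟩
      have : x ∈ (M ∪ S) \ P.I := ⟨Or.inl hxM, hxI⟩
      rw [hNst] at this
      rcases this with h | h
      · exact h
      · exact absurd (hMhb hxM) (hShb x h)
    · intro x hx
      have : x ∈ (M ∪ S) \ P.I := by
        rw [hNst]; exact Or.inl hx
      rcases this with ⟨hxMS | hxS, hxI⟩
      · exact ⟨hxMS, hxI⟩
      · exact absurd (hQhb hx) (hShb x hxS)
  refine ⟨⟨fun M hM => hmaps M hM, ?_, ?_⟩, fun M hM => hrec M hM.1⟩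
  · intro M1 h1 M2 h2 heq
    have heq' : M1 ∪ bar '' (choiceHeads P.R \ M1) = M2 ∪ bar '' (choiceHeads P.R \ M2) := heq
    calc M1 = (M1 ∪ bar '' (choiceHeads P.R \ M1)) ∩ P.hb := hrec M1 h1.1
    _ = (M2 ∪ bar '' (choiceHeads P.R \ M2)) ∩ P.hb := by rw [heq']
    _ = M2 := (hrec M2 h2.1).symm
  · intro N hN
    obtain ⟨M, hM, hMN⟩ := hsurj N hN
    exact ⟨M, hM, hMN⟩

end Final

/-- strong faithfulness of the translation `Tr_NLP`:
`f(M) = M ∪ {ā : a ∈ choice-heads(R) \ M}` is a bijection from `SM(P)` onto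
`SM(Tr_NLP(P))` satisfying `M = f(M) ∩ Hb(P)` for every stable model `M`. -/
theorem trNLP_strongly_faithful (P : SMod) (hwf : P.wf) (bar : ℕ → ℕ)
    (hinj : Function.Injective bar) (hfresh : ∀ n, bar n ∉ P.hb) :
    Set.BijOn (fun M => M ∪ bar '' (choiceHeads P.R \ M))
      P.SM (trNLP P bar).SM ∧
    ∀ M ∈ P.SM, M = (M ∪ bar '' (choiceHeads P.R \ M)) ∩ P.hb := by
  exact trNLP_strongly_faithful' P hwf bar hinj hfresh
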